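/- (Flocking) Suppose (x_i, v_i)_{i=1}^N follows the sticky particle Cucker–Smale dynamics associated to masses (m_i)_{i=1}^N and protocol φ. Define D_N(t) = x_N(t) − x_1(t), V_N(t) = max_{1≤i≤N} v_i(t) − min_{1≤i≤N} v_i(t), and Φ(x) = ∫_0^x φ(y)dy. Assume sup_{R>0} Φ(R) > E⁰ := Φ(D_N(0)) + V_N(0). Then, with D̄ := inf{R ≥ 0 : Φ(R) ≥ E⁰} (which is finite), one has D_N(t) ≤ D̄ for all t ≥ 0. -/

import Mathlib

/-!
The functional `E(t) = Φ(x_N - x_1) + (max_i v_i - min_i v_i)` never increases.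
Between collisions, at a pair `(p, q)` realising the velocity diameter, the alignment force on `p`
is at most `φ(D) (v̄ - v_p)` and the one on `q` at least `φ(D) (v̄ - v_q)`, because `φ(D)` is the
weakest interaction (`φ` decreases); this absorbs the growth `φ(D) (v_N - v_1)` of `Φ(D)`, and a
comparison argument for the maximum of finitely many functions bounds `E`. At a collision the new
velocities are mass averages of left limits, which exist because `v_j + ∑_k m_k Φ(x_j - x_k)` is
conserved between collisions, so the velocity diameter cannot jump up. Hence
`Φ(D(t)) ≤ E(t) ≤ E⁰`, and concavity of `Φ` on `[0, ∞)` turns this into `D(t) ≤ D̄`.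
-/

open MeasureTheory Set Filter
open scoped Classical

/-- `Φ(x) = ∫_0^x φ(y) dy`, the odd antiderivative of the communication protocol. -/
noncomputable def Phi (φ : ℝ → ℝ) (x : ℝ) : ℝ := ∫ y in (0:ℝ)..x, φ y

/-- The sticky particle Cucker–Smale dynamics with `N` particles, masses `m`,
communication protocol `φ`, collision-time set `C`, positions `x` and velocities `v`. -/
structure StickyCS (N : ℕ) (m : Fin N → ℝ) (φ : ℝ → ℝ) (C : Set ℝ)
    (x v : Fin N → ℝ → ℝ) : Prop where
  m_pos : ∀ i, 0 < m i
  m_sum : ∑ i, m i = 1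
  φ_nonneg : ∀ z, 0 ≤ φ z
  φ_even : ∀ z, φ (-z) = φ z
  φ_locint : ∀ a b : ℝ, IntervalIntegrable φ volume a b
  φ_anti : AntitoneOn φ (Ioi 0)
  φ_cont : ContinuousOn φ {(0:ℝ)}ᶜ
  C_fin : C.Finite
  C_pos : C ⊆ Ioi 0
  x_cont : ∀ i, ContinuousOn (x i) (Ici 0)
  x_ord : ∀ i j : Fin N, i ≤ j → ∀ t ∈ Ici (0:ℝ), x i t ≤ x j t
  v_rc : ∀ i, ∀ t ∈ Ici (0:ℝ), ContinuousWithinAt (v i) (Ici t) t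
  x_deriv : ∀ i, ∀ t ∈ Ici (0:ℝ) \ C, HasDerivWithinAt (x i) (v i t) (Ici 0) t
  v_deriv : ∀ i, ∀ t ∈ Ici (0:ℝ) \ C, HasDerivWithinAt (v i)
      (∑ j ∈ Finset.univ.filter (fun j => x j t ≠ x i t),
        m j * φ (x j t - x i t) * (v j t - v i t)) (Ici 0) t
  sticky : ∀ i j : Fin N, ∀ s t : ℝ, 0 ≤ s → s ≤ t → x i s = x j s → x i t = x j t
  collide : ∀ τ ∈ C, ∀ i : Fin N,
      v i τ = (∑ j ∈ Finset.univ.filter (fun j => x j τ = x i τ),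
                m j * Function.leftLim (v j) τ)
              / (∑ j ∈ Finset.univ.filter (fun j => x j τ = x i τ), m j)

open Topology

section MaxOfFunctions

variable {ι : Type*} [Fintype ι] [Nonempty ι]

lemma sup'_le_sup'_left_of_deriv_right_nonpos_at_argmax (h h' : ι → ℝ → ℝ) {a b : ℝ}
    (hcont : ∀ i, ContinuousOn (h i) (Icc a b))
    (hderiv : ∀ i, ∀ t ∈ Ico a b, HasDerivWithinAt (h i) (h' i t) (Ici t) t)
    (hargmax : ∀ t ∈ Ico a b, ∀ i, (∀ k, h k t ≤ h i t) → h' i t ≤ 0) :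
    ∀ t ∈ Icc a b, Finset.univ.sup' Finset.univ_nonempty (h · t)
      ≤ Finset.univ.sup' Finset.univ_nonempty (h · a) := by
  set f : ℝ → ℝ := fun t => Finset.univ.sup' Finset.univ_nonempty (h · t)
  refine image_le_of_liminf_slope_right_le_deriv_boundary (B := fun _ => f a) (B' := fun _ => 0)
    (ContinuousOn.finset_sup'_apply _ fun i _ => hcont i) le_rfl continuousOn_const
    (fun t _ => hasDerivWithinAt_const t _ _) ?_
  intro z hz r hr
  -- Every `h i` stays below the line of slope `r` through `(z, f z)`: the maximal ones because
  -- their right derivative is `≤ 0 < r`, the others by continuity.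
  have hbelow : ∀ i, ∀ᶠ w in 𝓝[>] z, h i w < f z + r * (w - z) := by
    intro i
    by_cases hi : h i z = f z
    · have hmax : ∀ k, h k z ≤ h i z := fun k => hi ▸ Finset.le_sup' (h · z) (Finset.mem_univ k)
      filter_upwards [(hderiv i z hz).Ioi_of_Ici.limsup_slope_le' (lt_irrefl z)
        ((hargmax z hz i hmax).trans_lt hr), self_mem_nhdsWithin] with w hw (hzw : z < w)
      rw [slope_def_field, div_lt_iff₀ (sub_pos.2 hzw)] at hw
      linarith
    · have hlt : h i z < f z := (Finset.le_sup' (h · z) (Finset.mem_univ i)).lt_of_ne hi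
      filter_upwards [((hderiv i z hz).continuousWithinAt.mono Ioi_subset_Ici_self)
        (Iio_mem_nhds hlt), self_mem_nhdsWithin] with w (hw : h i w < f z) (hzw : z < w)
      nlinarith
  refine Eventually.frequently ?_
  filter_upwards [eventually_all.2 hbelow, self_mem_nhdsWithin] with w hw (hzw : z < w)
  obtain ⟨i, -, hi⟩ := Finset.exists_mem_eq_sup' Finset.univ_nonempty (h · w)
  rw [slope_def_field, div_lt_iff₀ (sub_pos.2 hzw)]
  change f w - f z < r * (w - z)
  have : f w = h i w := hi
  linarith [hw i]

lemma sup'_le_sup'_left_of_deriv_right_nonpos_at_argmax_Ioo (h h' : ι → ℝ → ℝ) {a b : ℝ}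
    (hcont : ∀ i, ContinuousOn (h i) (Icc a b))
    (hderiv : ∀ i, ∀ t ∈ Ioo a b, HasDerivWithinAt (h i) (h' i t) (Ici t) t)
    (hargmax : ∀ t ∈ Ioo a b, ∀ i, (∀ k, h k t ≤ h i t) → h' i t ≤ 0) :
    ∀ t ∈ Icc a b, Finset.univ.sup' Finset.univ_nonempty (h · t)
      ≤ Finset.univ.sup' Finset.univ_nonempty (h · a) := by
  rintro t ⟨hat, htb⟩
  rcases hat.eq_or_lt with rfl | hat
  · exact le_rfl
  have hle : ∀ a' ∈ Ioc a t, Finset.univ.sup' Finset.univ_nonempty (h · t)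
      ≤ Finset.univ.sup' Finset.univ_nonempty (h · a') := fun a' ha' =>
    have hsub : Ico a' t ⊆ Ioo a b := fun s hs => ⟨ha'.1.trans_le hs.1, hs.2.trans_le htb⟩
    sup'_le_sup'_left_of_deriv_right_nonpos_at_argmax h h'
      (fun i => (hcont i).mono (Icc_subset_Icc ha'.1.le htb))
      (fun i s hs => hderiv i s (hsub hs)) (fun s hs => hargmax s (hsub hs)) t ⟨ha'.2, le_rfl⟩
  have hcontAt : ContinuousWithinAt (fun s => Finset.univ.sup' Finset.univ_nonempty (h · s))
      (Ioi a) a :=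
    (ContinuousWithinAt.finset_sup'_apply _ fun i _ =>
      (hcont i a (left_mem_Icc.2 (hat.le.trans htb)))).mono_of_mem_nhdsWithin
        (Icc_mem_nhdsGT (hat.trans_le htb))
  exact ge_of_tendsto hcontAt (mem_of_superset (Ioc_mem_nhdsGT hat) hle)

end MaxOfFunctions

lemma le_of_le_across_gaps_of_le_at_jumps {f : ℝ → ℝ} {C : Set ℝ} (hC : C.Finite) {a : ℝ}
    (hgap : ∀ lo t, a ≤ lo → lo ≤ t → (∀ s ∈ Ioc lo t, s ∉ C) → f t ≤ f lo)
    (hjump : ∀ τ ∈ C, a < τ → ∀ M, (∀ᶠ s in 𝓝[<] τ, f s ≤ M) → f τ ≤ M) :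
    ∀ t, a ≤ t → f t ≤ f a := by
  suffices key : ∀ S : Finset ℝ, ∀ t, a ≤ t → (∀ τ ∈ C, τ ∈ Ioc a t → τ ∈ S) → f t ≤ f a from
    fun t ht => key hC.toFinset t ht fun τ hτ _ => hC.mem_toFinset.2 hτ
  intro S
  induction S using Finset.induction_on_max with
  | empty => exact fun t ht hS => hgap a t le_rfl ht fun s hs hsC => by simpa using hS s hsC hs
  | insert τ S hlt ih =>
    intro t ht hS
    by_cases hτ : τ ∈ C ∧ τ ∈ Ioc a t
    · obtain ⟨hτC, haτ, hτt⟩ := hτ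
      have hgap' : f t ≤ f τ := hgap τ t haτ.le hτt fun s hs hsC => by
        rcases Finset.mem_insert.1 (hS s hsC ⟨haτ.trans hs.1, hs.2⟩) with rfl | hsS
        · exact lt_irrefl s hs.1
        · exact (hlt s hsS).not_gt hs.1
      refine hgap'.trans (hjump τ hτC haτ (f a) ?_)
      filter_upwards [Ioo_mem_nhdsLT haτ] with s hs
      refine ih s hs.1.le fun σ hσC hσ => ?_
      rcases Finset.mem_insert.1 (hS σ hσC ⟨hσ.1, hσ.2.trans (hs.2.le.trans hτt)⟩) with rfl | hσS
      · exact absurd (hσ.2.trans_lt hs.2) (lt_irrefl σ)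
      · exact hσS
    · refine ih t ht fun σ hσC hσ => ?_
      rcases Finset.mem_insert.1 (hS σ hσC hσ) with rfl | hσS
      · exact absurd ⟨hσC, hσ⟩ hτ
      · exact hσS

section Primitive

variable {φ : ℝ → ℝ}

lemma Phi_monotone (hnn : ∀ z, 0 ≤ φ z) (hli : ∀ a b : ℝ, IntervalIntegrable φ volume a b) :
    Monotone (Phi φ) := fun a b hab => by
  have hsplit : Phi φ b = Phi φ a + ∫ y in a..b, φ y :=
    (intervalIntegral.integral_add_adjacent_intervals (hli 0 a) (hli a b)).symm
  rw [hsplit]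
  exact le_add_of_nonneg_right (intervalIntegral.integral_nonneg hab fun y _ => hnn y)

lemma Phi_continuous (hli : ∀ a b : ℝ, IntervalIntegrable φ volume a b) :
    Continuous (Phi φ) :=
  intervalIntegral.continuous_primitive hli 0

lemma hasDerivAt_Phi (hli : ∀ a b : ℝ, IntervalIntegrable φ volume a b)
    (hcont : ContinuousOn φ {0}ᶜ) {z : ℝ} (hz : z ≠ 0) : HasDerivAt (Phi φ) (φ z) z :=
  intervalIntegral.integral_hasDerivAt_right (hli 0 z)
    (hcont.stronglyMeasurableAtFilter isOpen_compl_singleton z hz)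
    (hcont.continuousAt (isOpen_compl_singleton.mem_nhds hz))

lemma Phi_concaveOn (hli : ∀ a b : ℝ, IntervalIntegrable φ volume a b)
    (hcont : ContinuousOn φ {0}ᶜ) (hanti : AntitoneOn φ (Ioi 0)) :
    ConcaveOn ℝ (Ici 0) (Phi φ) := by
  have hderiv : ∀ z ∈ Ioi (0 : ℝ), HasDerivAt (Phi φ) (φ z) z := fun z hz =>
    hasDerivAt_Phi hli hcont (ne_of_gt hz)
  refine AntitoneOn.concaveOn_of_deriv (convex_Ici 0) (Phi_continuous hli).continuousOn ?_ ?_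
    <;> rw [interior_Ici]
  · exact fun z hz => (hderiv z hz).differentiableAt.differentiableWithinAt
  · intro a ha b hb hab
    rw [(hderiv a ha).deriv, (hderiv b hb).deriv]
    exact hanti ha hb hab

lemma le_sInf_of_Phi_le (hnn : ∀ z, 0 ≤ φ z) (hli : ∀ a b : ℝ, IntervalIntegrable φ volume a b)
    (hcont : ContinuousOn φ {0}ᶜ) (hanti : AntitoneOn φ (Ioi 0)) {E : ℝ}
    (hthreshold : ∃ R : ℝ, 0 < R ∧ E < Phi φ R) {d : ℝ} (hd : Phi φ d ≤ E) :
    d ≤ sInf {R : ℝ | 0 ≤ R ∧ E ≤ Phi φ R} := by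
  obtain ⟨R, hR0, hR⟩ := hthreshold
  set S := {R : ℝ | 0 ≤ R ∧ E ≤ Phi φ R}
  have hSclosed : IsClosed S :=
    isClosed_Ici.inter (isClosed_Ici.preimage (Phi_continuous hli))
  obtain ⟨hDbar0, hDbar⟩ : sInf S ∈ S :=
    hSclosed.csInf_mem ⟨R, hR0.le, hR.le⟩ ⟨0, fun _ hy => hy.1⟩
  by_contra! hlt
  have hdR : d < R := by
    by_contra! hRd
    linarith [Phi_monotone hnn hli hRd]
  -- By concavity the slope of `Phi φ` on `[d, R]` is at most the one on `[sInf S, d]`,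
  -- which is `≤ 0`; but `Phi φ R > E ≥ Phi φ d`.
  have hslope := (Phi_concaveOn hli hcont hanti).slope_anti_adjacent hDbar0
    (mem_Ici.2 (hDbar0.trans (hlt.trans hdR).le)) hlt hdR
  have hleft : (Phi φ d - Phi φ (sInf S)) / (d - sInf S) ≤ 0 :=
    div_nonpos_of_nonpos_of_nonneg (by linarith) (sub_pos.2 hlt).le
  have hright : 0 < (Phi φ R - Phi φ d) / (R - d) :=
    div_pos (by linarith) (sub_pos.2 hdR)
  linarith

end Primitive

lemma sum_mul_div_sum_mem_Icc {ι : Type*} {s : Finset ι} {m L : ι → ℝ} {lo hi : ℝ}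
    (hs : s.Nonempty) (hm : ∀ j ∈ s, 0 < m j) (hL : ∀ j ∈ s, L j ∈ Icc lo hi) :
    (∑ j ∈ s, m j * L j) / ∑ j ∈ s, m j ∈ Icc lo hi := by
  have hM : 0 < ∑ j ∈ s, m j := Finset.sum_pos hm hs
  rw [mem_Icc, le_div_iff₀ hM, div_le_iff₀ hM, Finset.mul_sum, Finset.mul_sum]
  exact ⟨Finset.sum_le_sum fun j hj => by nlinarith [hm j hj, (hL j hj).1],
    Finset.sum_le_sum fun j hj => by nlinarith [hm j hj, (hL j hj).2]⟩

section Alignment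

variable {ι : Type*} [Fintype ι] {m : ι → ℝ} {φ : ℝ → ℝ} {x v : ι → ℝ}

noncomputable def alignmentForce (m : ι → ℝ) (φ : ℝ → ℝ) (x v : ι → ℝ) (i : ι) : ℝ :=
  ∑ j ∈ Finset.univ.filter (fun j => x j ≠ x i), m j * φ (x j - x i) * (v j - v i)

lemma alignmentForce_neg (i : ι) :
    alignmentForce m φ x (fun j => -v j) i = -alignmentForce m φ x v i := by
  simp only [alignmentForce, ← Finset.sum_neg_distrib]
  exact Finset.sum_congr rfl fun j _ => by ring

lemma alignmentForce_le_of_isMax {c : ℝ} {i : ι} (hm : ∀ j, 0 ≤ m j) (hm1 : ∑ j, m j = 1)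
    (hc : ∀ j, x j ≠ x i → c ≤ φ (x j - x i)) (hv : ∀ j, x j = x i → v j = v i)
    (hmax : ∀ j, v j ≤ v i) :
    alignmentForce m φ x v i ≤ c * (∑ j, m j * v j - v i) :=
  calc alignmentForce m φ x v i
      ≤ ∑ j ∈ Finset.univ.filter (fun j => x j ≠ x i), m j * c * (v j - v i) :=
        Finset.sum_le_sum fun j hj => mul_le_mul_of_nonpos_right
          (mul_le_mul_of_nonneg_left (hc j (Finset.mem_filter.1 hj).2) (hm j))
          (sub_nonpos.2 (hmax j))
    _ = ∑ j, m j * c * (v j - v i) :=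
        Finset.sum_filter_of_ne fun j _ hj hx => hj (by rw [hv j hx, sub_self, mul_zero])
    _ = c * (∑ j, m j * v j - v i) := by
        simp only [mul_sub, Finset.sum_sub_distrib, ← Finset.sum_mul, hm1, Finset.mul_sum]
        exact congrArg₂ _ (Finset.sum_congr rfl fun j _ => by ring) (by ring)

lemma le_alignmentForce_of_isMin {c : ℝ} {i : ι} (hm : ∀ j, 0 ≤ m j) (hm1 : ∑ j, m j = 1)
    (hc : ∀ j, x j ≠ x i → c ≤ φ (x j - x i)) (hv : ∀ j, x j = x i → v j = v i)
    (hmin : ∀ j, v i ≤ v j) :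
    c * (∑ j, m j * v j - v i) ≤ alignmentForce m φ x v i := by
  have := alignmentForce_le_of_isMax (v := fun j => -v j) hm hm1 hc
    (fun j hj => by rw [hv j hj]) (fun j => neg_le_neg (hmin j))
  rw [alignmentForce_neg] at this
  simp only [mul_neg, Finset.sum_neg_distrib] at this
  linarith

lemma le_of_abs_le_of_antitoneOn (heven : ∀ z, φ (-z) = φ z) (hanti : AntitoneOn φ (Ioi 0))
    {d D : ℝ} (hd : d ≠ 0) (hdD : |d| ≤ D) : φ D ≤ φ d := by
  have hd' : 0 < |d| := abs_pos.2 hd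
  have habs : φ |d| = φ d := by
    rcases abs_choice d with h | h <;> rw [h]
    exact heven d
  exact habs ▸ hanti hd' (hd'.trans_le hdD) hdD

/-- The left-hand side is the rate of change of `Φ(x iN - x i0) + v p - v q` along the dynamics. -/
lemma energy_rate_nonpos_at_argmax {i0 iN p q : ι} (hm : ∀ j, 0 ≤ m j) (hm1 : ∑ j, m j = 1)
    (heven : ∀ z, φ (-z) = φ z) (hanti : AntitoneOn φ (Ioi 0)) (hnn : 0 ≤ φ (x iN - x i0))
    (hx : ∀ k, x i0 ≤ x k ∧ x k ≤ x iN) (hv : ∀ j k, x j = x k → v j = v k)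
    (hp : ∀ k, v k ≤ v p) (hq : ∀ k, v q ≤ v k) :
    φ (x iN - x i0) * (v iN - v i0) + alignmentForce m φ x v p
      - alignmentForce m φ x v q ≤ 0 := by
  have hc : ∀ i j, x j ≠ x i → φ (x iN - x i0) ≤ φ (x j - x i) := fun i j hji =>
    le_of_abs_le_of_antitoneOn heven hanti (sub_ne_zero.2 hji)
      (abs_sub_le_iff.2 ⟨by linarith [hx i, hx j], by linarith [hx i, hx j]⟩)
  have hFp := alignmentForce_le_of_isMax hm hm1 (hc p) (fun j hj => hv j p hj) hp
  have hFq := le_alignmentForce_of_isMin hm hm1 (hc q) (fun j hj => hv j q hj) hq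
  have hspread : φ (x iN - x i0) * ((v iN - v i0) - (v p - v q)) ≤ 0 :=
    mul_nonpos_of_nonneg_of_nonpos hnn (by linarith [hp iN, hq i0])
  linarith

end Alignment

lemma sup'_add_sub_eq {ι : Type*} [Fintype ι] [Nonempty ι] (c : ℝ) (w : ι → ℝ) :
    Finset.univ.sup' Finset.univ_nonempty (fun p : ι × ι => c + w p.1 - w p.2)
      = c + Finset.univ.sup' Finset.univ_nonempty w - Finset.univ.inf' Finset.univ_nonempty w := by
  refine le_antisymm (Finset.sup'_le _ _ fun p _ => ?_) ?_
  · linarith [Finset.le_sup' w (Finset.mem_univ p.1), Finset.inf'_le w (Finset.mem_univ p.2)]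
  · obtain ⟨i, -, hi⟩ := Finset.exists_mem_eq_sup' Finset.univ_nonempty w
    obtain ⟨j, -, hj⟩ := Finset.exists_mem_eq_inf' Finset.univ_nonempty w
    rw [hi, hj]
    exact Finset.le_sup' (fun p : ι × ι => c + w p.1 - w p.2) (Finset.mem_univ (i, j))

noncomputable def energy {ι : Type*} [Fintype ι] [Nonempty ι] (φ : ℝ → ℝ) (x v : ι → ℝ → ℝ)
    (i0 iN : ι) (t : ℝ) : ℝ :=
  Phi φ (x iN t - x i0 t) + Finset.univ.sup' Finset.univ_nonempty (v · t)
    - Finset.univ.inf' Finset.univ_nonempty (v · t)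

namespace StickyCS

variable {N : ℕ} {m : Fin N → ℝ} {φ : ℝ → ℝ} {C : Set ℝ} {x v : Fin N → ℝ → ℝ} {t : ℝ}

lemma continuousAt_x (h : StickyCS N m φ C x v) (ht : 0 < t) (i : Fin N) :
    ContinuousAt (x i) t :=
  (h.x_cont i).continuousAt (Ici_mem_nhds ht)

lemma hasDerivWithinAt_x (h : StickyCS N m φ C x v) (ht : t ∈ Ici 0 \ C) (i : Fin N) :
    HasDerivWithinAt (x i) (v i t) (Ici t) t :=
  (h.x_deriv i t ht).mono (Ici_subset_Ici.2 ht.1)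

lemma hasDerivWithinAt_v (h : StickyCS N m φ C x v) (ht : t ∈ Ici 0 \ C) (i : Fin N) :
    HasDerivWithinAt (v i) (alignmentForce m φ (x · t) (v · t) i) (Ici t) t :=
  (h.v_deriv i t ht).mono (Ici_subset_Ici.2 ht.1)

lemma continuousAt_v (h : StickyCS N m φ C x v) (ht : 0 < t) (htC : t ∉ C) (i : Fin N) :
    ContinuousAt (v i) t :=
  ((h.v_deriv i t ⟨ht.le, htC⟩).hasDerivAt (Ici_mem_nhds ht)).continuousAt

lemma continuousOn_v (h : StickyCS N m φ C x v) {lo : ℝ} (hlo : 0 ≤ lo)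
    (hC : ∀ s ∈ Ioc lo t, s ∉ C) (i : Fin N) : ContinuousOn (v i) (Icc lo t) := by
  intro s hs
  rcases hs.1.eq_or_lt with heq | hlt
  · rw [← heq]
    exact (h.v_rc i lo hlo).mono fun y hy => hy.1
  · exact (h.continuousAt_v (hlo.trans_lt hlt) (hC s ⟨hlt, hs.2⟩) i).continuousWithinAt

lemma v_eq_of_x_eq (h : StickyCS N m φ C x v) (ht : t ∈ Ici 0 \ C) {i j : Fin N}
    (hx : x j t = x i t) : v j t = v i t := by
  have hj : HasDerivWithinAt (x i) (v j t) (Ici t) t :=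
    (h.hasDerivWithinAt_x ht j).congr (fun s hs => (h.sticky j i t s ht.1 hs hx).symm) hx.symm
  exact (uniqueDiffOn_Ici t t self_mem_Ici).eq_deriv _ hj (h.hasDerivWithinAt_x ht i)

lemma hasDerivWithinAt_Phi_sub (h : StickyCS N m φ C x v) (ht : t ∈ Ici 0 \ C)
    (i j : Fin N) :
    HasDerivWithinAt (fun s => Phi φ (x j s - x i s)) (φ (x j t - x i t) * (v j t - v i t))
      (Ici t) t := by
  by_cases hx : x j t = x i t
  · rw [h.v_eq_of_x_eq ht hx, sub_self, mul_zero]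
    exact (hasDerivWithinAt_const t _ (Phi φ 0)).congr
      (fun s hs => by rw [h.sticky j i t s ht.1 hs hx, sub_self]) (by rw [hx, sub_self])
  · exact (hasDerivAt_Phi h.φ_locint h.φ_cont (sub_ne_zero.2 hx)).comp_hasDerivWithinAt t
      ((h.hasDerivWithinAt_x ht j).sub (h.hasDerivWithinAt_x ht i))

lemma hasDerivWithinAt_v_add_sum_Phi (h : StickyCS N m φ C x v) (ht : t ∈ Ici 0 \ C)
    (j : Fin N) :
    HasDerivWithinAt (fun s => v j s + ∑ k, m k * Phi φ (x j s - x k s)) 0 (Ici t) t := by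
  have hsum : alignmentForce m φ (x · t) (v · t) j
      + ∑ k, m k * (φ (x j t - x k t) * (v j t - v k t)) = 0 := by
    rw [alignmentForce, Finset.sum_filter, ← Finset.sum_add_distrib]
    refine Finset.sum_eq_zero fun k _ => ?_
    split_ifs with hk
    · rw [← neg_sub (x k t), h.φ_even]
      ring
    · rw [h.v_eq_of_x_eq ht (not_not.1 hk)]
      ring
  have := (h.hasDerivWithinAt_v ht j).add (HasDerivWithinAt.fun_sum (u := Finset.univ)
    fun k _ => (h.hasDerivWithinAt_Phi_sub ht k j).const_mul (m k))
  rwa [hsum] at this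

lemma exists_tendsto_nhdsLT (h : StickyCS N m φ C x v) {τ : ℝ} (hτ : 0 < τ) (j : Fin N) :
    ∃ L, Tendsto (v j) (𝓝[<] τ) (𝓝 L) := by
  have hfree : ∀ᶠ s in 𝓝[<] τ, 0 < s ∧ s ∉ C := by
    have hnear : ∀ᶠ s in 𝓝[<] τ, s ∉ C \ {τ} := nhdsWithin_le_nhds
      (h.C_fin.sdiff.isClosed.isOpen_compl.mem_nhds fun hτ' => hτ'.2 rfl)
    filter_upwards [Ioo_mem_nhdsLT hτ, hnear] with s hs hsC
    exact ⟨hs.1, fun hs' => hsC ⟨hs', hs.2.ne⟩⟩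
  obtain ⟨l, hl, hsub⟩ := mem_nhdsLT_iff_exists_Ioo_subset.1 hfree
  set g : ℝ → ℝ := fun s => ∑ k, m k * Phi φ (x j s - x k s)
  have hg : ∀ s, 0 < s → ContinuousAt g s := fun s hs =>
    tendsto_finsetSum _ fun k _ => continuousAt_const.mul
      ((Phi_continuous h.φ_locint).continuousAt.comp
        ((h.continuousAt_x hs j).sub (h.continuousAt_x hs k)))
  obtain ⟨s₀, hs₀⟩ : (Ioo l τ).Nonempty := nonempty_Ioo.2 hl
  have hconst : ∀ s ∈ Ico s₀ τ, v j s + g s = v j s₀ + g s₀ := by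
    intro s hs
    have hIcc : Icc s₀ s ⊆ Ioo l τ := fun y hy => ⟨hs₀.1.trans_le hy.1, hy.2.trans_lt hs.2⟩
    refine constant_of_has_deriv_right_zero (f := fun y => v j y + g y) (fun y hy => ?_)
      (fun y hy => ?_) s ⟨hs.1, le_rfl⟩
    · obtain ⟨hy0, hyC⟩ := hsub (hIcc hy)
      exact ((h.continuousAt_v hy0 hyC j).add (hg y hy0)).continuousWithinAt
    · obtain ⟨hy0, hyC⟩ := hsub (hIcc (Ico_subset_Icc_self hy))
      exact h.hasDerivWithinAt_v_add_sum_Phi ⟨hy0.le, hyC⟩ j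
  refine ⟨v j s₀ + g s₀ - g τ, (tendsto_const_nhds.sub
    ((hg τ hτ).tendsto.mono_left nhdsWithin_le_nhds)).congr' ?_⟩
  filter_upwards [Ioo_mem_nhdsLT hs₀.2] with s hs
  rw [← hconst s ⟨hs.1.le, hs.2⟩, add_sub_cancel_right]

lemma tendsto_leftLim (h : StickyCS N m φ C x v) {τ : ℝ} (hτ : 0 < τ) (j : Fin N) :
    Tendsto (v j) (𝓝[<] τ) (𝓝 (Function.leftLim (v j) τ)) := by
  obtain ⟨L, hL⟩ := h.exists_tendsto_nhdsLT hτ j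
  rwa [leftLim_eq_of_tendsto hL]

lemma v_mem_Icc_leftLim (h : StickyCS N m φ C x v) [Nonempty (Fin N)] {τ : ℝ} (hτ : τ ∈ C)
    (i : Fin N) :
    v i τ ∈ Icc (Finset.univ.inf' Finset.univ_nonempty (fun j => Function.leftLim (v j) τ))
      (Finset.univ.sup' Finset.univ_nonempty (fun j => Function.leftLim (v j) τ)) := by
  rw [h.collide τ hτ i]
  exact sum_mul_div_sum_mem_Icc ⟨i, by simp⟩ (fun j _ => h.m_pos j) fun j _ =>
    ⟨Finset.inf'_le _ (Finset.mem_univ j),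
      Finset.le_sup' (fun j => Function.leftLim (v j) τ) (Finset.mem_univ j)⟩

variable [Nonempty (Fin N)] {i0 iN : Fin N}

lemma energy_le_of_eventually_le (h : StickyCS N m φ C x v) {τ : ℝ} (hτ : τ ∈ C) {M : ℝ}
    (hM : ∀ᶠ s in 𝓝[<] τ, energy φ x v i0 iN s ≤ M) : energy φ x v i0 iN τ ≤ M := by
  have hτ0 : 0 < τ := h.C_pos hτ
  have hlim : Tendsto (energy φ x v i0 iN) (𝓝[<] τ)
      (𝓝 (Phi φ (x iN τ - x i0 τ)
        + Finset.univ.sup' Finset.univ_nonempty (fun j => Function.leftLim (v j) τ)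
        - Finset.univ.inf' Finset.univ_nonempty (fun j => Function.leftLim (v j) τ))) :=
    ((((Phi_continuous h.φ_locint).continuousAt.comp ((h.continuousAt_x hτ0 iN).sub
      (h.continuousAt_x hτ0 i0))).tendsto.mono_left nhdsWithin_le_nhds).add
      (Tendsto.finset_sup'_nhds_apply _ fun j _ => h.tendsto_leftLim hτ0 j)).sub
      (Tendsto.finset_inf'_nhds_apply _ fun j _ => h.tendsto_leftLim hτ0 j)
  have hsup := Finset.sup'_le Finset.univ_nonempty (v · τ) fun i _ => (h.v_mem_Icc_leftLim hτ i).2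
  have hinf := Finset.le_inf' Finset.univ_nonempty (v · τ) fun i _ => (h.v_mem_Icc_leftLim hτ i).1
  have := le_of_tendsto hlim hM
  rw [energy]
  linarith

lemma energy_le_of_forall_notMem (h : StickyCS N m φ C x v) (hi0 : ∀ k, i0 ≤ k)
    (hiN : ∀ k, k ≤ iN) {lo : ℝ} (hlo : 0 ≤ lo) (hlot : lo ≤ t) (hC : ∀ s ∈ Ioc lo t, s ∉ C) :
    energy φ x v i0 iN t ≤ energy φ x v i0 iN lo := by
  have hfree : Ioo lo t ⊆ Ici 0 \ C := fun s hs =>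
    ⟨hlo.trans hs.1.le, hC s (Ioo_subset_Ioc_self hs)⟩
  have hPhi : ContinuousOn (fun s => Phi φ (x iN s - x i0 s)) (Icc lo t) :=
    (Phi_continuous h.φ_locint).comp_continuousOn
      (((h.x_cont iN).sub (h.x_cont i0)).mono fun s hs => hlo.trans hs.1)
  have key := sup'_le_sup'_left_of_deriv_right_nonpos_at_argmax_Ioo
    (fun (p : Fin N × Fin N) s => Phi φ (x iN s - x i0 s) + v p.1 s - v p.2 s)
    (fun (p : Fin N × Fin N) s => φ (x iN s - x i0 s) * (v iN s - v i0 s)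
      + alignmentForce m φ (x · s) (v · s) p.1 - alignmentForce m φ (x · s) (v · s) p.2)
    (fun p => (hPhi.add (h.continuousOn_v hlo hC p.1)).sub (h.continuousOn_v hlo hC p.2))
    (fun p s hs => ((h.hasDerivWithinAt_Phi_sub (hfree hs) i0 iN).add
      (h.hasDerivWithinAt_v (hfree hs) p.1)).sub (h.hasDerivWithinAt_v (hfree hs) p.2))
    (fun s hs p hp => ?_) t ⟨hlot, le_rfl⟩
  · rwa [energy, energy, ← sup'_add_sub_eq, ← sup'_add_sub_eq]
  have hs0 : 0 ≤ s := (hfree hs).1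
  exact energy_rate_nonpos_at_argmax (fun j => (h.m_pos j).le) h.m_sum h.φ_even h.φ_anti
    (h.φ_nonneg _) (fun k => ⟨h.x_ord i0 k (hi0 k) s hs0, h.x_ord k iN (hiN k) s hs0⟩)
    (fun j k hjk => h.v_eq_of_x_eq (hfree hs) hjk)
    (fun k => by linarith [hp (k, p.2)]) (fun k => by linarith [hp (p.1, k)])

lemma energy_le_energy_zero (h : StickyCS N m φ C x v) (hi0 : ∀ k, i0 ≤ k)
    (hiN : ∀ k, k ≤ iN) : ∀ t, 0 ≤ t → energy φ x v i0 iN t ≤ energy φ x v i0 iN 0 :=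
  le_of_le_across_gaps_of_le_at_jumps h.C_fin
    (fun _ _ hlo hlot hC => h.energy_le_of_forall_notMem hi0 hiN hlo hlot hC)
    (fun _ hτ _ _ hM => h.energy_le_of_eventually_le hτ hM)

end StickyCS

/-- **Flocking.** Let `D_N(t) = x_N(t) − x_1(t)` and
`V_N(t) = max_i v_i(t) − min_i v_i(t)`. If `sup_{R>0} Φ(R) > E⁰ := Φ(D_N(0)) + V_N(0)`,
then with `D̄ := inf{R ≥ 0 : Φ(R) ≥ E⁰}` one has `D_N(t) ≤ D̄` for all `t ≥ 0`. -/
theorem sticky_CS_flocking {N : ℕ} (hN : 0 < N) (m : Fin N → ℝ) (φ : ℝ → ℝ)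
    (C : Set ℝ) (x v : Fin N → ℝ → ℝ) (h : StickyCS N m φ C x v)
    (D V : ℝ → ℝ)
    (hD : ∀ t, D t = x ⟨N - 1, Nat.sub_lt hN Nat.one_pos⟩ t - x ⟨0, hN⟩ t)
    (hV : ∀ t, V t = Finset.univ.sup' ⟨⟨0, hN⟩, Finset.mem_univ _⟩ (fun i => v i t)
        - Finset.univ.inf' ⟨⟨0, hN⟩, Finset.mem_univ _⟩ (fun i => v i t))
    (E0 : ℝ) (hE0 : E0 = Phi φ (D 0) + V 0)
    (hthreshold : ∃ R : ℝ, 0 < R ∧ E0 < Phi φ R)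
    (Dbar : ℝ) (hDbar : Dbar = sInf {R : ℝ | 0 ≤ R ∧ E0 ≤ Phi φ R}) :
    ∀ t : ℝ, 0 ≤ t → D t ≤ Dbar := by
  have : Nonempty (Fin N) := ⟨⟨0, hN⟩⟩
  set i0 : Fin N := ⟨0, hN⟩
  set iN : Fin N := ⟨N - 1, Nat.sub_lt hN Nat.one_pos⟩
  have henergy : ∀ t, energy φ x v i0 iN t = Phi φ (D t) + V t := fun t => by
    rw [energy, hD, hV]
    ring
  have hV0 : ∀ t, 0 ≤ V t := fun t => by
    rw [hV, sub_nonneg]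
    exact (Finset.inf'_le _ (Finset.mem_univ i0)).trans
      (Finset.le_sup' (v · t) (Finset.mem_univ i0))
  intro t ht
  have hdecay := h.energy_le_energy_zero (i0 := i0) (iN := iN) (fun k => Nat.zero_le k.val)
    (fun k => Fin.le_iff_val_le_val.2 (Nat.le_sub_one_of_lt k.isLt)) t ht
  rw [henergy, henergy, ← hE0] at hdecay
  rw [hDbar]
  exact le_sInf_of_Phi_le h.φ_nonneg h.φ_locint h.φ_cont h.φ_anti hthreshold
    (by linarith [hV0 t])
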